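/- arXiv:2011.03013 — 2 statements merged into one kernel-verified Lean document; each statement's English description precedes it below -/
import Mathlib

section
/- Let μ ∈ (0, 1/4], let p be a prime, and let v be a finite tuple over ℤ/pℤ with at least one nonzero coordinate. Then ρ_μ(v) ≤ 64/√(μ·|v|) + 1/p, where |v| is the number of nonzero coordinates of v. -/
/-- `probX μ v x` is the probability that the random walk `X_μ(v) = ε₁v₁ + ⋯ + εₙvₙ`
(valued in `ℤ/pℤ`) equals `x`, where `ε₁,…,εₙ` are i.i.d. with
`P(εᵢ = 1) = P(εᵢ = -1) = μ/2` and `P(εᵢ = 0) = 1 - μ`. -/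
noncomputable def probX {p : ℕ} [NeZero p] {ι : Type} [Fintype ι] [DecidableEq ι]
    (μ : ℝ) (v : ι → ZMod p) (x : ZMod p) : ℝ :=
  ∑ ε : ι → ({-1, 0, 1} : Finset ℤ),
    (∏ i, if (ε i : ℤ) = 0 then 1 - μ else μ / 2) *
      (if (∑ i, ((ε i : ℤ) : ZMod p) * v i) = x then 1 else 0)

/-- `rho μ v = max_x P(X_μ(v) = x)`, the largest atom of the random walk `X_μ(v)`. -/
noncomputable def rho {p : ℕ} [NeZero p] {ι : Type} [Fintype ι] [DecidableEq ι]
    (μ : ℝ) (v : ι → ZMod p) : ℝ :=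
  ⨆ x : ZMod p, probX μ v x
/-!
Fourier inversion on `ℤ/pℤ` gives `P(X = x) = p⁻¹ ∑_ξ e(ξx/p) ∏ᵢ φ(-ξvᵢ)`, where
`φ(a) = 1 - μ + μ cos(2πa/p) ∈ [0, 1]` is the Fourier transform of one step. AM-GM over the
`m = |v|` nonzero coordinates, followed by the substitution `a = -ξvᵢ`, bounds the sum over `ξ`
by `∑_a φ(a)^m`. The term `a = 0` is the `1/p`. For `a ≠ 0`, `cos(2πt) ≤ 1 - 8t²` gives
`φ(a)^m ≤ e · exp(-4√(μm)‖a/p‖)`; each value of `p‖a/p‖` is taken at most twice, so these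
terms are dominated by two geometric series of total sum `≤ e p / (2√(μm))`.
-/

open Finset Real
open scoped ZMod

theorem AddChar.map_sum_eq_prod {A M ι : Type*} [AddCommMonoid A] [CommMonoid M]
    (ψ : AddChar A M) (s : Finset ι) (f : ι → A) :
    ψ (∑ i ∈ s, f i) = ∏ i ∈ s, ψ (f i) := by
  induction s using Finset.cons_induction with
  | empty => simp
  | cons a s ha ih => rw [sum_cons, prod_cons, AddChar.map_add_eq_mul, ih]

theorem Finset.prod_le_inv_card_mul_sum_pow {ι : Type*} {s : Finset ι} (hs : s.Nonempty)
    {f : ι → ℝ} (hf : ∀ i ∈ s, 0 ≤ f i) :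
    ∏ i ∈ s, f i ≤ (#s : ℝ)⁻¹ * ∑ i ∈ s, f i ^ #s := by
  have hcard : (#s : ℝ) ≠ 0 := by positivity
  have amgm := geom_mean_le_arith_mean_weighted s (fun _ ↦ (#s : ℝ)⁻¹) (fun i ↦ f i ^ #s)
    (fun _ _ ↦ by positivity) (by simp [hcard]) (fun i hi ↦ pow_nonneg (hf i hi) _)
  rw [mul_sum]
  convert amgm using 2 with i hi
  exact (pow_rpow_inv_natCast (hf i hi) hs.card_pos.ne').symm

theorem Real.exp_neg_div_one_sub_exp_neg_le {x : ℝ} (hx : 0 < x) :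
    exp (-x) / (1 - exp (-x)) ≤ x⁻¹ := by
  have hlt : exp (-x) < 1 := exp_lt_one_iff.2 (neg_lt_zero.2 hx)
  have hmul : exp (-x) * exp x = 1 := by rw [← exp_add, neg_add_cancel, exp_zero]
  rw [div_le_iff₀ (sub_pos.2 hlt), ← div_eq_inv_mul, le_div_iff₀ hx]
  nlinarith [add_one_le_exp x]

section

variable {p : ℕ}

namespace ZMod

theorem stdAddChar_add_stdAddChar_neg [NeZero p] (a : ZMod p) :
    stdAddChar a + stdAddChar (-a) = 2 * (cos (2 * π * a.valMinAbs / p) : ℂ) := by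
  conv_lhs => rw [← coe_valMinAbs a, ← Int.cast_neg, stdAddChar_coe, stdAddChar_coe]
  rw [Complex.ofReal_cos, Complex.cos]
  push_cast
  ring_nf

theorem natAbs_valMinAbs_eq_val_or_val_neg [NeZero p] (a : ZMod p) :
    a.valMinAbs.natAbs = a.val ∨ a.valMinAbs.natAbs = (-a).val := by
  rw [valMinAbs_natAbs_eq_min, neg_val]
  split_ifs with h
  · simp [h]
  · omega

theorem sum_erase_zero_pow_val_le [NeZero p] {r : ℝ} (hr0 : 0 ≤ r) (hr1 : r < 1) :
    ∑ a ∈ univ.erase (0 : ZMod p), r ^ a.val ≤ r / (1 - r) := by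
  rw [← sum_image fun a _ b _ h ↦ val_injective p h]
  calc _ ≤ ∑ j ∈ Ico 1 p, r ^ j := by
        refine sum_le_sum_of_subset_of_nonneg (fun j hj ↦ ?_) fun j _ _ ↦ pow_nonneg hr0 j
        obtain ⟨a, ha, rfl⟩ := mem_image.1 hj
        have := (val_ne_zero a).2 (ne_of_mem_erase ha)
        simpa [Nat.one_le_iff_ne_zero, this] using val_lt a
    _ ≤ r / (1 - r) := (geom_sum_Ico_le_of_lt_one hr0 hr1).trans_eq (by rw [pow_one])

theorem sum_erase_zero_pow_natAbs_valMinAbs_le [NeZero p] {r : ℝ} (hr0 : 0 ≤ r)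
    (hr1 : r < 1) :
    ∑ a ∈ univ.erase (0 : ZMod p), r ^ a.valMinAbs.natAbs ≤ 2 * (r / (1 - r)) := by
  have hneg : ∑ a ∈ univ.erase (0 : ZMod p), r ^ (-a).val =
      ∑ a ∈ univ.erase (0 : ZMod p), r ^ a.val :=
    sum_equiv (Equiv.neg _) (by simp) (by simp)
  calc _ ≤ ∑ a ∈ univ.erase (0 : ZMod p), (r ^ a.val + r ^ (-a).val) := by
        refine sum_le_sum fun a _ ↦ ?_
        have := pow_nonneg hr0 a.val
        have := pow_nonneg hr0 (-a).val
        rcases a.natAbs_valMinAbs_eq_val_or_val_neg with h | h <;> rw [h] <;> linarith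
    _ ≤ 2 * (r / (1 - r)) := by
        rw [sum_add_distrib, hneg]
        linarith [sum_erase_zero_pow_val_le (p := p) hr0 hr1]

end ZMod

/-- `E e(εa/p)` for one step `ε` of `X_μ`; `a.valMinAbs ∈ (-p/2, p/2]` is the representative
of `a` nearest to `0`, so that `|a.valMinAbs| / p` is the distance from `a/p` to `ℤ`. -/
noncomputable def lazyStepFourier (μ : ℝ) (a : ZMod p) : ℝ :=
  1 - μ + μ * cos (2 * π * a.valMinAbs / p)

theorem lazyStepFourier_zero (μ : ℝ) : lazyStepFourier μ (0 : ZMod p) = 1 := by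
  simp [lazyStepFourier]

theorem lazyStepFourier_nonneg {μ : ℝ} (hμ0 : 0 ≤ μ) (hμ : μ ≤ 1 / 2) (a : ZMod p) :
    0 ≤ lazyStepFourier μ a := by
  have := neg_one_le_cos (2 * π * a.valMinAbs / p)
  unfold lazyStepFourier
  nlinarith

theorem sum_lazyStep_mul_stdAddChar [NeZero p] (μ : ℝ) (a : ZMod p) :
    ∑ s ∈ ({-1, 0, 1} : Finset ℤ),
        (if s = 0 then 1 - (μ : ℂ) else μ / 2) * ZMod.stdAddChar ((s : ZMod p) * a) =
      lazyStepFourier μ a := by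
  rw [sum_insert (by decide), sum_insert (by decide), sum_singleton, lazyStepFourier]
  have hpair := a.stdAddChar_add_stdAddChar_neg
  simp only [if_neg (by decide : (-1 : ℤ) ≠ 0), if_neg one_ne_zero, Int.cast_neg,
    Int.cast_one, Int.cast_zero, neg_one_mul, one_mul, zero_mul, AddChar.map_zero_eq_one]
  push_cast at hpair ⊢
  linear_combination (μ / 2 : ℂ) * hpair

theorem lazyStepFourier_le_exp [NeZero p] {μ : ℝ} (hμ0 : 0 ≤ μ) (a : ZMod p) :
    lazyStepFourier μ a ≤ exp (-(8 * μ * (a.valMinAbs.natAbs / p) ^ 2)) := by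
  have hp : (0 : ℝ) < p := by simpa using NeZero.pos p
  have hhalf : (a.valMinAbs.natAbs : ℝ) * 2 ≤ p := by
    have := ZMod.natAbs_valMinAbs_le a
    exact_mod_cast (by omega : a.valMinAbs.natAbs * 2 ≤ p)
  have habs : |2 * π * a.valMinAbs / p| = 2 * π * (a.valMinAbs.natAbs / p) := by
    rw [abs_div, abs_mul, abs_of_pos two_pi_pos, abs_of_pos hp, Nat.cast_natAbs, Int.cast_abs,
      mul_div_assoc]
  have hcos : cos (2 * π * a.valMinAbs / p) ≤ 1 - 8 * (a.valMinAbs.natAbs / p) ^ 2 := by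
    refine (cos_le_one_sub_mul_cos_sq ?_).trans_eq ?_
    · rw [habs, ← le_div_iff₀' two_pi_pos, div_le_iff₀ hp]
      field_simp
      linarith
    · rw [← sq_abs (2 * π * _ / _), habs]
      field_simp
      ring
  calc lazyStepFourier μ a ≤ 1 + -(8 * μ * (a.valMinAbs.natAbs / p) ^ 2) := by
        unfold lazyStepFourier
        nlinarith
    _ ≤ _ := add_one_le_exp _ |>.trans_eq' (add_comm _ _)

theorem lazyStepFourier_pow_le [NeZero p] {μ : ℝ} (hμ0 : 0 ≤ μ) (hμ : μ ≤ 1 / 2) (m : ℕ)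
    (a : ZMod p) :
    lazyStepFourier μ a ^ m ≤ exp 1 * exp (-(4 * √(μ * m) / p)) ^ a.valMinAbs.natAbs := by
  set t : ℝ := a.valMinAbs.natAbs / p with ht
  have hD : √(μ * m) ^ 2 = μ * m := sq_sqrt (by positivity)
  calc lazyStepFourier μ a ^ m ≤ exp (-(8 * μ * t ^ 2)) ^ m :=
        pow_le_pow_left₀ (lazyStepFourier_nonneg hμ0 hμ a) (lazyStepFourier_le_exp hμ0 a) m
    _ = exp (-(8 * (√(μ * m) * t) ^ 2)) := by
        rw [← exp_nat_mul, mul_pow, hD]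
        ring_nf
    _ ≤ exp (1 - 4 * (√(μ * m) * t)) :=
        exp_le_exp.2 (by nlinarith [sq_nonneg (4 * (√(μ * m) * t) - 1)])
    _ = exp 1 * exp (-(4 * √(μ * m) / p)) ^ a.valMinAbs.natAbs := by
        rw [← exp_nat_mul, ← exp_add, ht]
        ring_nf

theorem sum_lazyStepFourier_pow_le [NeZero p] {μ : ℝ} (hμ0 : 0 < μ) (hμ : μ ≤ 1 / 2) {m : ℕ}
    (hm : 0 < m) :
    ∑ a : ZMod p, lazyStepFourier μ a ^ m ≤ 1 + exp 1 * p / (2 * √(μ * m)) := by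
  have hx : 0 < 4 * √(μ * m) / p := by
    have := NeZero.pos p
    positivity
  set r := exp (-(4 * √(μ * m) / p))
  rw [← add_sum_erase _ _ (mem_univ 0), lazyStepFourier_zero, one_pow]
  gcongr
  calc ∑ a ∈ univ.erase (0 : ZMod p), lazyStepFourier μ a ^ m
      ≤ exp 1 * ∑ a ∈ univ.erase (0 : ZMod p), r ^ a.valMinAbs.natAbs := by
        rw [mul_sum]
        exact sum_le_sum fun a _ ↦ lazyStepFourier_pow_le hμ0.le hμ m a
    _ ≤ exp 1 * (2 * (4 * √(μ * m) / p)⁻¹) := by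
        gcongr
        exact (ZMod.sum_erase_zero_pow_natAbs_valMinAbs_le (exp_pos _).le
          (exp_lt_one_iff.2 (neg_lt_zero.2 hx))).trans
          (mul_le_mul_of_nonneg_left (exp_neg_div_one_sub_exp_neg_le hx) zero_le_two)
    _ = exp 1 * p / (2 * √(μ * m)) := by
        field_simp
        ring

theorem dft_probX [NeZero p] {ι : Type} [Fintype ι] [DecidableEq ι] (μ : ℝ)
    (v : ι → ZMod p) (ξ : ZMod p) :
    𝓕 (fun x ↦ (probX μ v x : ℂ)) ξ = ∏ i, (lazyStepFourier μ (-(v i * ξ)) : ℂ) := by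
  have step : ∀ i, (lazyStepFourier μ (-(v i * ξ)) : ℂ) = ∑ s : ({-1, 0, 1} : Finset ℤ),
      (if (s : ℤ) = 0 then 1 - (μ : ℂ) else μ / 2) *
        ZMod.stdAddChar (((s : ℤ) : ZMod p) * -(v i * ξ)) := fun i ↦
    ((sum_coe_sort _ _).trans (sum_lazyStep_mul_stdAddChar μ _)).symm
  simp_rw [step, Fintype.prod_sum, ZMod.dft_apply, probX, smul_eq_mul]
  push_cast
  simp only [mul_sum]
  rw [sum_comm]
  refine sum_congr rfl fun ε _ ↦ ?_
  have hsum : ∑ i, ((ε i : ℤ) : ZMod p) * -(v i * ξ) =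
      -((∑ i, ((ε i : ℤ) : ZMod p) * v i) * ξ) := by
    simp [sum_mul, mul_assoc]
  rw [prod_mul_distrib, ← AddChar.map_sum_eq_prod, hsum]
  push_cast [apply_ite ((↑·) : ℝ → ℂ)]
  simp [mul_ite, mul_comm]

theorem probX_le_sum_prod [NeZero p] {ι : Type} [Fintype ι] [DecidableEq ι] {μ : ℝ}
    (hμ0 : 0 ≤ μ) (hμ : μ ≤ 1 / 2) (v : ι → ZMod p) (x : ZMod p) :
    probX μ v x ≤ (p : ℝ)⁻¹ * ∑ ξ, ∏ i, lazyStepFourier μ (-(v i * ξ)) := by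
  have inversion : (probX μ v x : ℂ) = (p : ℂ)⁻¹ *
      ∑ ξ, ZMod.stdAddChar (ξ * x) * ∏ i, (lazyStepFourier μ (-(v i * ξ)) : ℂ) := by
    simp_rw [← dft_probX]
    exact (congrFun (ZMod.dft.symm_apply_apply fun x ↦ (probX μ v x : ℂ)) x).symm.trans
      (ZMod.invDFT_apply _ x)
  calc probX μ v x ≤ ‖(probX μ v x : ℂ)‖ := (le_abs_self _).trans_eq (Complex.norm_real _).symm
    _ ≤ (p : ℝ)⁻¹ *
          ∑ ξ, ‖ZMod.stdAddChar (ξ * x) * ∏ i, (lazyStepFourier μ (-(v i * ξ)) : ℂ)‖ := by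
        rw [inversion, norm_mul, norm_inv, Complex.norm_natCast]
        gcongr
        exact norm_sum_le _ _
    _ = (p : ℝ)⁻¹ * ∑ ξ, ∏ i, lazyStepFourier μ (-(v i * ξ)) := by
        simp_rw [norm_mul, ZMod.stdAddChar_apply, Circle.norm_coe, one_mul, norm_prod,
          Complex.norm_real, Real.norm_of_nonneg (lazyStepFourier_nonneg hμ0 hμ _)]

theorem sum_prod_lazyStepFourier_le [Fact p.Prime] {ι : Type} [Fintype ι] {μ : ℝ}
    (hμ0 : 0 ≤ μ) (hμ : μ ≤ 1 / 2) (v : ι → ZMod p) (hv : ∃ i, v i ≠ 0) :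
    ∑ ξ : ZMod p, ∏ i, lazyStepFourier μ (-(v i * ξ)) ≤
      ∑ a : ZMod p, lazyStepFourier μ a ^ #{i | v i ≠ 0} := by
  set S := ({i | v i ≠ 0} : Finset ι)
  have hS : S.Nonempty := by simpa [S, Finset.Nonempty] using hv
  have reindex : ∀ i ∈ S,
      ∑ ξ, lazyStepFourier μ (-(v i * ξ)) ^ #S = ∑ a, lazyStepFourier μ a ^ #S :=
    fun i hi ↦ ((Equiv.mulLeft₀ (v i) (mem_filter.1 hi).2).trans (Equiv.neg _)).sum_comp
      (lazyStepFourier μ · ^ #S)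
  calc ∑ ξ, ∏ i, lazyStepFourier μ (-(v i * ξ))
      = ∑ ξ, ∏ i ∈ S, lazyStepFourier μ (-(v i * ξ)) := by
        refine sum_congr rfl fun ξ _ ↦ (prod_filter_of_ne fun i _ h ↦ ?_).symm
        contrapose! h
        rw [h, zero_mul, neg_zero, lazyStepFourier_zero]
    _ ≤ ∑ ξ, (#S : ℝ)⁻¹ * ∑ i ∈ S, lazyStepFourier μ (-(v i * ξ)) ^ #S :=
        sum_le_sum fun ξ _ ↦
          prod_le_inv_card_mul_sum_pow hS fun i _ ↦ lazyStepFourier_nonneg hμ0 hμ _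
    _ = (#S : ℝ)⁻¹ * ∑ i ∈ S, ∑ a, lazyStepFourier μ a ^ #S := by
        rw [← mul_sum, sum_comm, sum_congr rfl reindex]
    _ = ∑ a, lazyStepFourier μ a ^ #S := by
        rw [sum_const, nsmul_eq_mul, inv_mul_cancel_left₀ (by positivity)]

end

/-- **Lemma 4.3.** Let `μ ∈ (0, 1/4]`, `p` prime, and let `v` be a tuple over `ℤ/pℤ` with at
least one nonzero coordinate. Then `ρ_μ(v) ≤ 64/√(μ|v|) + 1/p`, where `|v|` is the number of
nonzero coordinates of `v`. -/
theorem rho_le_of_support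
    (μ : ℝ) (hμ : μ ∈ Set.Ioc (0 : ℝ) (1 / 4)) (p n : ℕ) [Fact p.Prime]
    (v : Fin n → ZMod p) (hv : ∃ i, v i ≠ 0) :
    rho μ v ≤
      64 / Real.sqrt (μ * ((Finset.univ.filter fun i => v i ≠ 0).card : ℝ)) + 1 / p := by
  obtain ⟨hμ0, hμ4⟩ := hμ
  have hμ2 : μ ≤ 1 / 2 := by linarith
  set m := #{i | v i ≠ 0}
  have hm : 0 < m := card_pos.2 (by simpa [Finset.Nonempty] using hv)
  have hD : 0 < √(μ * m) := by positivity
  refine ciSup_le fun x ↦ ?_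
  calc probX μ v x ≤ (p : ℝ)⁻¹ * ∑ ξ, ∏ i, lazyStepFourier μ (-(v i * ξ)) :=
        probX_le_sum_prod hμ0.le hμ2 v x
    _ ≤ (p : ℝ)⁻¹ * (1 + exp 1 * p / (2 * √(μ * m))) := by
        gcongr
        exact (sum_prod_lazyStepFourier_le hμ0.le hμ2 v hv).trans
          (sum_lazyStepFourier_pow_le hμ0 hμ2 hm)
    _ = exp 1 / 2 / √(μ * m) + 1 / p := by
        have := (Fact.out : p.Prime).pos
        field_simp
        ring
    _ ≤ 64 / √(μ * m) + 1 / p := by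
        gcongr
        linarith [exp_one_lt_d9]
end

section
/- Let p be a prime, let M be a uniformly random n × n symmetric matrix with entries in {-1, 1} (entries reduced mod p), let v ∈ (ℤ/pℤ)^n, let w ∈ (ℤ/pℤ)^n, and let T' ⊆ S ⊆ [n]. Then P(M·v = w) ≤ ρ(v_{T'})^{|S| - |T'|} · ρ(v_S)^{n - |S|}, where the matrix-vector product is over ℤ/pℤ. -/
/-- `symPr n E` is the probability that a uniformly random `n × n` symmetric matrix
with entries in `{-1, 1}` lies in the event `E`. -/
noncomputable def symPr (n : ℕ) (E : Set (Matrix (Fin n) (Fin n) ℤ)) : ℝ :=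
  (Nat.card {A : Matrix (Fin n) (Fin n) ℤ |
      (A.IsSymm ∧ ∀ i j, A i j = 1 ∨ A i j = -1) ∧ A ∈ E} : ℝ) /
  (Nat.card {A : Matrix (Fin n) (Fin n) ℤ |
      A.IsSymm ∧ ∀ i j, A i j = 1 ∨ A i j = -1} : ℝ)

/-!
A symmetric `±1` matrix is the same as a sign pattern `g : Sym2 ι → ℤˣ` on unordered pairs, so a
uniformly random such matrix is a uniformly random `g`. Fix a row `r` and a set of columns `U`, and
resample the entries `g s(r, k)`, `k ∈ U`, leaving the others alone. Row `r` of `M v = w` then reads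
`∑_{k ∈ U} ε_k v_k = const` for uniform signs `ε`, which has probability at most `ρ(v_U)`, while the
equation of any other row `r' ∉ U` does not see the resampled entries. Revealing the rows of
`S \ T'` against the columns `T'`, and the rows outside `S` against the columns `S`, gives the
bound.
-/

open Finset Function Matrix

section Rho

variable {p : ℕ} [NeZero p] {ι : Type} [Fintype ι] [DecidableEq ι]

theorem probX_one (v : ι → ZMod p) (x : ZMod p) :
    probX 1 v x =
      #{σ : ι → ℤˣ | ∑ i, ((σ i : ℤ) : ZMod p) * v i = x} / Fintype.card (ι → ℤˣ) := by
  have hcard : (Fintype.card (ι → ℤˣ) : ℝ) = 2 ^ Fintype.card ι := by simp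
  rw [natCast_card_filter, hcard, sum_div, probX]
  symm
  refine sum_of_injOn (fun σ i => ⟨σ i, ?_⟩) ?_ (fun _ _ => mem_coe.2 (mem_univ _)) ?_ ?_
  · rcases Int.units_eq_one_or (σ i) with h | h <;> simp [h]
  · exact fun σ _ τ _ h => funext fun i => Units.ext (congrArg Subtype.val (congrFun h i))
  · intro ε _ hε
    obtain ⟨i, hi⟩ : ∃ i, (ε i : ℤ) = 0 := by
      by_contra! h
      have hpm (i : ι) : (ε i : ℤ) = 1 ∨ (ε i : ℤ) = -1 := by
        have := (ε i).2
        simp only [mem_insert, mem_singleton] at this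
        have := h i
        omega
      exact hε ⟨fun i => (Int.isUnit_iff.2 (hpm i)).unit, mem_coe.2 (mem_univ _),
        funext fun i => Subtype.ext (Int.isUnit_iff.2 (hpm i)).unit_spec⟩
    rw [prod_eq_zero (mem_univ i) (by simp [hi]), zero_mul]
  · intro σ _
    simp only [Units.ne_zero, if_false, prod_const, card_univ]
    split_ifs <;> simp

theorem probX_le_rho (v : ι → ZMod p) (x : ZMod p) : probX 1 v x ≤ rho 1 v :=
  le_ciSup (Finite.bddAbove_range _) x

theorem rho_nonneg (v : ι → ZMod p) : 0 ≤ rho 1 v :=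
  le_trans (by rw [probX_one]; positivity) (probX_le_rho v 0)

theorem card_sum_eq_le_rho (v : ι → ZMod p) (x : ZMod p) :
    (#{σ : ι → ℤˣ | ∑ i, ((σ i : ℤ) : ZMod p) * v i = x} : ℝ) ≤
      rho 1 v * Fintype.card (ι → ℤˣ) := by
  rw [← div_le_iff₀ (by positivity), ← probX_one]
  exact probX_le_rho v x

end Rho

theorem card_filter_and_le_of_extend {ι K β : Type*} [Fintype ι] [DecidableEq ι] [Fintype K]
    [DecidableEq K] [Fintype β] [Nonempty β] {φ : ι → K} (hφ : Injective φ)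
    {E F : (K → β) → Prop} [DecidablePred E] [DecidablePred F] {c : ℝ}
    (hF : ∀ g ε, F (extend φ ε g) ↔ F g)
    (hE : ∀ g, (#{ε | E (extend φ ε g)} : ℝ) ≤ c * Fintype.card (ι → β)) :
    (#{g | E g ∧ F g} : ℝ) ≤ c * #{g | F g} := by
  -- `(g, ε) ↦ (extend φ ε g, g ∘ φ)` is an involution: overwriting `g` on the range of `φ` by a
  -- uniformly random `ε` leaves the uniform distribution of `g` unchanged.
  let Θ : (K → β) × (ι → β) → (K → β) × (ι → β) := fun x => (extend φ x.2 x.1, x.1 ∘ φ)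
  have hΘ : Involutive Θ := by
    rintro ⟨g, ε⟩
    refine Prod.ext (funext fun z => ?_) (funext fun i => hφ.extend_apply _ _ i)
    by_cases hz : ∃ i, φ i = z
    · obtain ⟨i, rfl⟩ := hz
      simp only [Θ, Function.comp_apply, hφ.extend_apply]
    · simp only [Θ, extend_apply' _ _ _ hz]
  have hcard : (0 : ℝ) < Fintype.card (ι → β) := by exact_mod_cast Fintype.card_pos
  refine le_of_mul_le_mul_right ?_ hcard
  calc (#{g | E g ∧ F g} : ℝ) * Fintype.card (ι → β)
      = ∑ x : (K → β) × (ι → β), if E x.1 ∧ F x.1 then 1 else 0 := by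
        rw [Fintype.sum_prod_type, natCast_card_filter, sum_mul]
        refine sum_congr rfl fun g _ => ?_
        split_ifs <;> simp
    _ = ∑ x, if E (Θ x).1 ∧ F (Θ x).1 then 1 else 0 := (Equiv.sum_comp (hΘ.toPerm Θ) _).symm
    _ = ∑ g, if F g then (#{ε | E (extend φ ε g)} : ℝ) else 0 := by
        rw [Fintype.sum_prod_type]
        refine sum_congr rfl fun g _ => ?_
        simp only [Θ, hF, natCast_card_filter]
        split_ifs <;> simp_all
    _ ≤ ∑ g, if F g then c * Fintype.card (ι → β) else 0 :=
        sum_le_sum fun g _ => by split_ifs; exacts [hE g, le_rfl]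
    _ = c * #{g | F g} * Fintype.card (ι → β) := by
        rw [← sum_filter, sum_const, nsmul_eq_mul]
        ring

def signMatrix (R : Type*) [Ring R] {ι : Type*} (g : Sym2 ι → ℤˣ) : Matrix ι ι R :=
  Matrix.of fun i j => ((g s(i, j) : ℤ) : R)

section SignMatrix

variable {ι : Type*}

theorem signMatrix_injective : Injective (signMatrix ℤ : (Sym2 ι → ℤˣ) → Matrix ι ι ℤ) :=
  fun _ _ h => funext fun z => Sym2.ind (fun i j => Units.ext (congrFun₂ h i j)) z

theorem range_signMatrix :
    Set.range (signMatrix ℤ : (Sym2 ι → ℤˣ) → Matrix ι ι ℤ) =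
      {A | A.IsSymm ∧ ∀ i j, A i j = 1 ∨ A i j = -1} := by
  ext A
  constructor
  · rintro ⟨g, rfl⟩
    refine ⟨IsSymm.ext fun i j => by simp [signMatrix, Sym2.eq_swap], fun i j => ?_⟩
    rcases Int.units_eq_one_or (g s(i, j)) with h | h <;> simp [signMatrix, h]
  · rintro ⟨hsymm, hpm⟩
    refine ⟨Sym2.lift ⟨fun i j => (Int.isUnit_iff.2 (hpm i j)).unit, fun i j => ?_⟩, ?_⟩
    · exact Units.ext (by simpa using (hsymm.apply i j).symm)
    · ext i j
      simp [signMatrix]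

theorem signMatrix_mulVec_apply {R : Type*} [Ring R] [Fintype ι] (g : Sym2 ι → ℤˣ)
    (v : ι → R) (r : ι) :
    (signMatrix R g *ᵥ v) r = ∑ j, ((g s(r, j) : ℤ) : R) * v j :=
  rfl

theorem signMatrix_extend_mulVec_apply_self {R : Type*} [Ring R] [Fintype ι] [DecidableEq ι]
    (U : Finset ι) (r : ι) (ε : U → ℤˣ) (g : Sym2 ι → ℤˣ) (v : ι → R) :
    (signMatrix R (extend (fun k : U => s(r, ↑k)) ε g) *ᵥ v) r =
      ∑ k : U, ((ε k : ℤ) : R) * v k + ∑ j ∈ Uᶜ, ((g s(r, j) : ℤ) : R) * v j := by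
  have hφ : Injective (fun k : U => s(r, ↑k)) :=
    (Sym2.mkEmbedding r).injective.comp Subtype.val_injective
  rw [signMatrix_mulVec_apply, ← sum_add_sum_compl U, ← sum_coe_sort U]
  congr 1
  · exact sum_congr rfl fun k _ => by rw [hφ.extend_apply]
  · refine sum_congr rfl fun j hj => ?_
    rw [extend_apply']
    rintro ⟨k, hk⟩
    exact mem_compl.1 hj (Sym2.congr_right.1 hk ▸ k.2)

theorem signMatrix_extend_mulVec_apply_of_ne {R : Type*} [Ring R] [Fintype ι] {U : Finset ι}
    {r r' : ι} (hr' : r' ≠ r) (hU : r' ∉ U) (ε : U → ℤˣ) (g : Sym2 ι → ℤˣ) (v : ι → R) :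
    (signMatrix R (extend (fun k : U => s(r, ↑k)) ε g) *ᵥ v) r' = (signMatrix R g *ᵥ v) r' := by
  rw [signMatrix_mulVec_apply, signMatrix_mulVec_apply]
  refine sum_congr rfl fun j _ => ?_
  rw [extend_apply']
  rintro ⟨k, hk⟩
  rcases Sym2.eq_iff.1 hk with ⟨h, -⟩ | ⟨-, h⟩
  · exact hr' h.symm
  · exact hU (h ▸ k.2)

end SignMatrix

theorem symPr_eq (n : ℕ) (E : Set (Matrix (Fin n) (Fin n) ℤ)) [DecidablePred (· ∈ E)] :
    symPr n E = #{g : Sym2 (Fin n) → ℤˣ | signMatrix ℤ g ∈ E} /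
      Fintype.card (Sym2 (Fin n) → ℤˣ) := by
  have hnum : {A : Matrix (Fin n) (Fin n) ℤ |
      (A.IsSymm ∧ ∀ i j, A i j = 1 ∨ A i j = -1) ∧ A ∈ E} =
        signMatrix ℤ '' (signMatrix ℤ ⁻¹' E) := by
    rw [Set.image_preimage_eq_range_inter, range_signMatrix]
    rfl
  rw [symPr, hnum, ← range_signMatrix, Nat.card_image_of_injective signMatrix_injective,
    Nat.card_range_of_injective signMatrix_injective, ← Fintype.card_subtype]
  congr 2
  · exact Nat.card_eq_fintype_card (α := {g : Sym2 (Fin n) → ℤˣ // signMatrix ℤ g ∈ E})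
  · exact Nat.card_eq_fintype_card

section Rows

variable {p : ℕ} [NeZero p] {ι : Type} [Fintype ι] [DecidableEq ι]

theorem card_extend_mulVec_apply_eq_le (U : Finset ι) (r : ι) (g : Sym2 ι → ℤˣ)
    (v : ι → ZMod p) (x : ZMod p) :
    (#{ε : U → ℤˣ | (signMatrix (ZMod p) (extend (fun k : U => s(r, ↑k)) ε g) *ᵥ v) r = x} : ℝ)
      ≤ rho 1 (fun k : U => v k) * Fintype.card (U → ℤˣ) := by
  simp_rw [signMatrix_extend_mulVec_apply_self, ← eq_sub_iff_add_eq]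
  exact card_sum_eq_le_rho _ _

theorem card_mulVec_apply_eq_and_le (v w : ι → ZMod p) (U R : Finset ι) (hRU : Disjoint R U)
    {F : (Sym2 ι → ℤˣ) → Prop} [DecidablePred F]
    (hF : ∀ r ∈ R, ∀ g (ε : U → ℤˣ), F (extend (fun k : U => s(r, ↑k)) ε g) ↔ F g) :
    (#{g | (∀ r ∈ R, (signMatrix (ZMod p) g *ᵥ v) r = w r) ∧ F g} : ℝ)
      ≤ rho 1 (fun k : U => v k) ^ #R * #{g | F g} := by
  induction R using Finset.induction_on with
  | empty => simp
  | insert r R hr ih =>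
    have hRU' : Disjoint R U := disjoint_of_subset_left (subset_insert r R) hRU
    have hrest : ∀ g (ε : U → ℤˣ),
        ((∀ r' ∈ R, (signMatrix (ZMod p) (extend (fun k : U => s(r, ↑k)) ε g) *ᵥ v) r' = w r') ∧
          F (extend (fun k : U => s(r, ↑k)) ε g)) ↔
        ((∀ r' ∈ R, (signMatrix (ZMod p) g *ᵥ v) r' = w r') ∧ F g) := by
      intro g ε
      refine and_congr (forall₂_congr fun r' hr' => ?_) (hF r (mem_insert_self r R) g ε)
      rw [signMatrix_extend_mulVec_apply_of_ne (ne_of_mem_of_not_mem hr' hr)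
        (disjoint_left.1 hRU' hr')]
    have hsplit : ∀ g, ((∀ r' ∈ insert r R, (signMatrix (ZMod p) g *ᵥ v) r' = w r') ∧ F g) ↔
        ((signMatrix (ZMod p) g *ᵥ v) r = w r ∧
          ((∀ r' ∈ R, (signMatrix (ZMod p) g *ᵥ v) r' = w r') ∧ F g)) := by
      simp only [forall_mem_insert, and_assoc, implies_true]
    rw [filter_congr fun g _ => hsplit g, card_insert_of_notMem hr, pow_succ', mul_assoc]
    refine (card_filter_and_le_of_extend (E := fun g => (signMatrix (ZMod p) g *ᵥ v) r = w r)
      ((Sym2.mkEmbedding r).injective.comp Subtype.val_injective) hrest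
      fun g => card_extend_mulVec_apply_eq_le U r g v (w r)).trans ?_
    exact mul_le_mul_of_nonneg_left (ih hRU' fun r' hr' => hF r' (mem_insert_of_mem hr'))
      (rho_nonneg _)

theorem card_signMatrix_mulVec_eq_le (v w : ι → ZMod p) {T' S : Finset ι} (hT'S : T' ⊆ S) :
    (#{g | signMatrix (ZMod p) g *ᵥ v = w} : ℝ) ≤
      rho 1 (fun k : T' => v k) ^ (#S - #T') * rho 1 (fun k : S => v k) ^ (Fintype.card ι - #S) *
        Fintype.card (Sym2 ι → ℤˣ) := by
  have hcompl : (#{g | ∀ r ∈ Sᶜ, (signMatrix (ZMod p) g *ᵥ v) r = w r} : ℝ) ≤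
      rho 1 (fun k : S => v k) ^ #Sᶜ * Fintype.card (Sym2 ι → ℤˣ) := by
    simpa using card_mulVec_apply_eq_and_le v w S Sᶜ disjoint_compl_left (F := fun _ => True)
      (by simp)
  have hsdiff := card_mulVec_apply_eq_and_le v w T' (S \ T') sdiff_disjoint
    (F := fun g => ∀ r ∈ Sᶜ, (signMatrix (ZMod p) g *ᵥ v) r = w r) fun r hr g ε =>
      forall₂_congr fun r' hr' => by
        rw [signMatrix_extend_mulVec_apply_of_ne (ne_of_mem_of_not_mem (mem_sdiff.1 hr).1
          (mem_compl.1 hr')).symm (fun h => mem_compl.1 hr' (hT'S h))]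
  have hrows : (#{g | signMatrix (ZMod p) g *ᵥ v = w} : ℝ) ≤
      #{g | (∀ r ∈ S \ T', (signMatrix (ZMod p) g *ᵥ v) r = w r) ∧
        ∀ r ∈ Sᶜ, (signMatrix (ZMod p) g *ᵥ v) r = w r} := by
    refine Nat.cast_le.2 (card_le_card (monotone_filter_right _ fun g _ h => ?_))
    exact ⟨fun r _ => congrFun h r, fun r _ => congrFun h r⟩
  calc _ ≤ _ := hrows
    _ ≤ _ := hsdiff
    _ ≤ _ := mul_le_mul_of_nonneg_left hcompl (pow_nonneg (rho_nonneg _) _)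
    _ = _ := by rw [card_sdiff_of_subset hT'S, card_compl, mul_assoc]

end Rows

/-- **Inequality (3.4).** Let `p` be prime, `M` a uniformly random `n × n` symmetric `±1`
matrix (entries reduced mod `p`), `v, w ∈ (ℤ/pℤ)ⁿ` and `T' ⊆ S ⊆ [n]`. Then
`P(M v = w) ≤ ρ(v_{T'})^{|S| - |T'|} ρ(v_S)^{n - |S|}`, where `ρ = rho 1` corresponds to
i.i.d. uniform `±1` coefficients. -/
theorem row_reveal_bound
    (p : ℕ) [Fact p.Prime] (n : ℕ) (v w : Fin n → ZMod p)
    (T' S : Finset (Fin n)) (hT'S : T' ⊆ S) :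
    symPr n {A | (A.map (Int.cast : ℤ → ZMod p)).mulVec v = w} ≤
      rho 1 (fun i : T' => v i.1) ^ (S.card - T'.card) *
        rho 1 (fun i : S => v i.1) ^ (n - S.card) := by
  rw [symPr_eq, div_le_iff₀ (by exact_mod_cast Fintype.card_pos)]
  have h := card_signMatrix_mulVec_eq_le v w hT'S
  rw [Fintype.card_fin] at h
  exact h
end
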